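/- Let g(x) = min(x, 1-x). Then ψ₇ := ∫₀¹ ( ∫₀ᵘ ∫₀ˢ (2 g(s) + g(r))² dr ds ) · g(u)² du = 1/105. -/

import Mathlib

/-- The weight function `g(x) = x ∧ (1 - x)`. -/
noncomputable def g : ℝ → ℝ := fun x => min x (1 - x)

lemma g_cont : Continuous g := continuous_id.min (continuous_const.sub continuous_id)

lemma g_left {x : ℝ} (h : x ≤ 1/2) : g x = x := min_eq_left (by linarith)

lemma g_right {x : ℝ} (h : 1/2 ≤ x) : g x = 1 - x := min_eq_right (by linarith)

lemma ii_congr {f h : ℝ → ℝ} {a b : ℝ} (hf : IntervalIntegrable f MeasureTheory.volume a b)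
    (he : Set.EqOn f h (Set.uIcc a b)) : IntervalIntegrable h MeasureTheory.volume a b := by
  rw [intervalIntegrable_iff] at *
  exact hf.congr_fun (he.mono Set.uIoc_subset_uIcc) measurableSet_uIoc

lemma int_poly2 (a b c0 c1 c2 : ℝ) :
    (∫ x in a..b, (c0 + c1*x + c2*x^2)) =
      (c0*b + c1/2*b^2 + c2/3*b^3) - (c0*a + c1/2*a^2 + c2/3*a^3) := by
  apply intervalIntegral.integral_eq_sub_of_hasDerivAt
  · intro x _
    have h1 := hasDerivAt_id x
    have h2 := hasDerivAt_pow 2 x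
    have h3 := hasDerivAt_pow 3 x
    convert ((h1.const_mul c0).add (h2.const_mul (c1/2))).add (h3.const_mul (c2/3)) using 1
    · funext y; simp only [Pi.add_apply, id_eq]
    · push_cast; ring
  · exact (Continuous.intervalIntegrable (by continuity) a b)

lemma int_poly3 (a b c0 c1 c2 c3 : ℝ) :
    (∫ x in a..b, (c0 + c1*x + c2*x^2 + c3*x^3)) =
      (c0*b + c1/2*b^2 + c2/3*b^3 + c3/4*b^4) - (c0*a + c1/2*a^2 + c2/3*a^3 + c3/4*a^4) := by
  apply intervalIntegral.integral_eq_sub_of_hasDerivAt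
  · intro x _
    have h1 := hasDerivAt_id x
    have h2 := hasDerivAt_pow 2 x
    have h3 := hasDerivAt_pow 3 x
    have h4 := hasDerivAt_pow 4 x
    convert (((h1.const_mul c0).add (h2.const_mul (c1/2))).add (h3.const_mul (c2/3))).add
      (h4.const_mul (c3/4)) using 1
    · funext y; simp only [Pi.add_apply, id_eq]
    · push_cast; ring
  · exact (Continuous.intervalIntegrable (by continuity) a b)

lemma int_poly6 (a b c0 c1 c2 c3 c4 c5 c6 : ℝ) :
    (∫ x in a..b, (c0 + c1*x + c2*x^2 + c3*x^3 + c4*x^4 + c5*x^5 + c6*x^6)) =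
      (c0*b + c1/2*b^2 + c2/3*b^3 + c3/4*b^4 + c4/5*b^5 + c5/6*b^6 + c6/7*b^7)
      - (c0*a + c1/2*a^2 + c2/3*a^3 + c3/4*a^4 + c4/5*a^5 + c5/6*a^6 + c6/7*a^7) := by
  apply intervalIntegral.integral_eq_sub_of_hasDerivAt
  · intro x _
    have h1 := hasDerivAt_id x
    have h2 := hasDerivAt_pow 2 x
    have h3 := hasDerivAt_pow 3 x
    have h4 := hasDerivAt_pow 4 x
    have h5 := hasDerivAt_pow 5 x
    have h6 := hasDerivAt_pow 6 x
    have h7 := hasDerivAt_pow 7 x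
    convert ((((((h1.const_mul c0).add (h2.const_mul (c1/2))).add (h3.const_mul (c2/3))).add
      (h4.const_mul (c3/4))).add (h5.const_mul (c4/5))).add (h6.const_mul (c5/6))).add
      (h7.const_mul (c6/7)) using 1
    · funext y; simp only [Pi.add_apply, id_eq]
    · push_cast; ring
  · exact (Continuous.intervalIntegrable (by continuity) a b)

/-- Inner integral for `s ∈ [0, 1/2]`. -/
lemma inner_left {s : ℝ} (h0 : 0 ≤ s) (h : s ≤ 1/2) :
    (∫ r in (0:ℝ)..s, (2 * g s + g r)^2) = 19/3 * s^3 := by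
  have : (∫ r in (0:ℝ)..s, (2 * g s + g r)^2)
      = ∫ r in (0:ℝ)..s, (4*s^2 + (4*s)*r + 1*r^2) := by
    apply intervalIntegral.integral_congr
    intro r hr
    beta_reduce
    rw [Set.uIcc_of_le h0] at hr
    rw [g_left h, g_left (le_trans hr.2 h)]
    ring
  rw [this, int_poly2]; ring

/-- Inner integral for `s ∈ [1/2, 1]`. -/
lemma inner_right {s : ℝ} (h : 1/2 ≤ s) (h1 : s ≤ 1) :
    (∫ r in (0:ℝ)..s, (2 * g s + g r)^2) = -5/4 + 10*s - 15*s^2 + 19/3 * s^3 := by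
  have hi : ∀ a b : ℝ, IntervalIntegrable (fun r => (2 * g s + g r)^2) MeasureTheory.volume a b :=
    fun a b => Continuous.intervalIntegrable ((continuous_const.add g_cont).pow 2) a b
  rw [← intervalIntegral.integral_add_adjacent_intervals (hi 0 (1/2)) (hi (1/2) s)]
  have e1 : (∫ r in (0:ℝ)..(1/2:ℝ), (2 * g s + g r)^2)
      = ∫ r in (0:ℝ)..(1/2:ℝ), ((2-2*s)^2 + (2*(2-2*s))*r + 1*r^2) := by
    apply intervalIntegral.integral_congr
    intro r hr
    beta_reduce
    rw [Set.uIcc_of_le (by norm_num : (0:ℝ) ≤ 1/2)] at hr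
    rw [g_right h, g_left hr.2]
    ring
  have e2 : (∫ r in (1/2:ℝ)..s, (2 * g s + g r)^2)
      = ∫ r in (1/2:ℝ)..s, ((3-2*s)^2 + (-2*(3-2*s))*r + 1*r^2) := by
    apply intervalIntegral.integral_congr
    intro r hr
    beta_reduce
    rw [Set.uIcc_of_le h] at hr
    rw [g_right h, g_right hr.1]
    ring
  rw [e1, e2, int_poly2, int_poly2]; ring

/-- Middle integral for `u ∈ [0, 1/2]`. -/
lemma mid_left {u : ℝ} (h0 : 0 ≤ u) (h : u ≤ 1/2) :
    (∫ s in (0:ℝ)..u, ∫ r in (0:ℝ)..s, (2 * g s + g r)^2) = 19/12 * u^4 := by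
  have : (∫ s in (0:ℝ)..u, ∫ r in (0:ℝ)..s, (2 * g s + g r)^2)
      = ∫ s in (0:ℝ)..u, (0 + 0*s + 0*s^2 + (19/3)*s^3) := by
    apply intervalIntegral.integral_congr
    intro s hs
    beta_reduce
    rw [Set.uIcc_of_le h0] at hs
    rw [inner_left hs.1 (le_trans hs.2 h)]
    ring
  rw [this, int_poly3]; ring

/-- Middle integral for `u ∈ [1/2, 1]`. -/
lemma mid_right {u : ℝ} (h : 1/2 ≤ u) (h1 : u ≤ 1) :
    (∫ s in (0:ℝ)..u, ∫ r in (0:ℝ)..s, (2 * g s + g r)^2)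
      = -5/4*u + 5*u^2 - 5*u^3 + 19/12 * u^4 := by
  have hpoly3 : ∀ (c0 c1 c2 c3 a b : ℝ),
      IntervalIntegrable (fun x => c0 + c1*x + c2*x^2 + c3*x^3) MeasureTheory.volume a b :=
    fun c0 c1 c2 c3 a b => Continuous.intervalIntegrable (by continuity) a b
  have ia : IntervalIntegrable (fun s => ∫ r in (0:ℝ)..s, (2 * g s + g r)^2)
      MeasureTheory.volume 0 (1/2) := by
    apply ii_congr (hpoly3 0 0 0 (19/3) 0 (1/2))
    intro s hs
    beta_reduce
    rw [Set.uIcc_of_le (by norm_num : (0:ℝ) ≤ 1/2)] at hs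
    rw [inner_left hs.1 hs.2]; ring
  have ib : IntervalIntegrable (fun s => ∫ r in (0:ℝ)..s, (2 * g s + g r)^2)
      MeasureTheory.volume (1/2) u := by
    apply ii_congr (hpoly3 (-5/4) 10 (-15) (19/3) (1/2) u)
    intro s hs
    beta_reduce
    rw [Set.uIcc_of_le h] at hs
    rw [inner_right hs.1 (le_trans hs.2 h1)]; ring
  rw [← intervalIntegral.integral_add_adjacent_intervals ia ib]
  have e1 : (∫ s in (0:ℝ)..(1/2:ℝ), ∫ r in (0:ℝ)..s, (2 * g s + g r)^2)
      = ∫ s in (0:ℝ)..(1/2:ℝ), (0 + 0*s + 0*s^2 + (19/3)*s^3) := by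
    apply intervalIntegral.integral_congr
    intro s hs
    beta_reduce
    rw [Set.uIcc_of_le (by norm_num : (0:ℝ) ≤ 1/2)] at hs
    rw [inner_left hs.1 hs.2]; ring
  have e2 : (∫ s in (1/2:ℝ)..u, ∫ r in (0:ℝ)..s, (2 * g s + g r)^2)
      = ∫ s in (1/2:ℝ)..u, (-5/4 + 10*s + (-15)*s^2 + (19/3)*s^3) := by
    apply intervalIntegral.integral_congr
    intro s hs
    beta_reduce
    rw [Set.uIcc_of_le h] at hs
    rw [inner_right hs.1 (le_trans hs.2 h1)]; ring
  rw [e1, e2, int_poly3, int_poly3]; ring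

/-- `ψ₇ = ∫₀¹ (∫₀ᵘ ∫₀ˢ (2g(s) + g(r))² dr ds) g(u)² du = 1/105` for `g(x) = x ∧ (1-x)`. -/
theorem psi7_value :
    ∫ u in (0:ℝ)..1,
      (∫ s in (0:ℝ)..u, ∫ r in (0:ℝ)..s, (2 * g s + g r)^2) * (g u)^2 = 1/105 := by
  have hpoly6 : ∀ (c0 c1 c2 c3 c4 c5 c6 a b : ℝ),
      IntervalIntegrable (fun x => c0 + c1*x + c2*x^2 + c3*x^3 + c4*x^4 + c5*x^5 + c6*x^6)
        MeasureTheory.volume a b :=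
    fun c0 c1 c2 c3 c4 c5 c6 a b => Continuous.intervalIntegrable (by continuity) a b
  have e1 : (∫ u in (0:ℝ)..(1/2:ℝ),
        (∫ s in (0:ℝ)..u, ∫ r in (0:ℝ)..s, (2 * g s + g r)^2) * (g u)^2)
      = ∫ u in (0:ℝ)..(1/2:ℝ), (0 + 0*u + 0*u^2 + 0*u^3 + 0*u^4 + 0*u^5 + (19/12)*u^6) := by
    apply intervalIntegral.integral_congr
    intro u hu
    beta_reduce
    rw [Set.uIcc_of_le (by norm_num : (0:ℝ) ≤ 1/2)] at hu
    rw [mid_left hu.1 hu.2, g_left hu.2]; ring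
  have e2 : (∫ u in (1/2:ℝ)..1,
        (∫ s in (0:ℝ)..u, ∫ r in (0:ℝ)..s, (2 * g s + g r)^2) * (g u)^2)
      = ∫ u in (1/2:ℝ)..1, (0 + (-5/4)*u + (15/2)*u^2 + (-65/4)*u^3 + (199/12)*u^4
          + (-49/6)*u^5 + (19/12)*u^6) := by
    apply intervalIntegral.integral_congr
    intro u hu
    beta_reduce
    rw [Set.uIcc_of_le (by norm_num : (1/2:ℝ) ≤ 1)] at hu
    rw [mid_right hu.1 hu.2, g_right hu.1]; ring
  have ia : IntervalIntegrable
      (fun u => (∫ s in (0:ℝ)..u, ∫ r in (0:ℝ)..s, (2 * g s + g r)^2) * (g u)^2)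
      MeasureTheory.volume 0 (1/2) := by
    apply ii_congr (hpoly6 0 0 0 0 0 0 (19/12) 0 (1/2))
    intro u hu
    beta_reduce
    rw [Set.uIcc_of_le (by norm_num : (0:ℝ) ≤ 1/2)] at hu
    rw [mid_left hu.1 hu.2, g_left hu.2]; ring
  have ib : IntervalIntegrable
      (fun u => (∫ s in (0:ℝ)..u, ∫ r in (0:ℝ)..s, (2 * g s + g r)^2) * (g u)^2)
      MeasureTheory.volume (1/2) 1 := by
    apply ii_congr (hpoly6 0 (-5/4) (15/2) (-65/4) (199/12) (-49/6) (19/12) (1/2) 1)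
    intro u hu
    beta_reduce
    rw [Set.uIcc_of_le (by norm_num : (1/2:ℝ) ≤ 1)] at hu
    rw [mid_right hu.1 hu.2, g_right hu.1]; ring
  rw [← intervalIntegral.integral_add_adjacent_intervals ia ib, e1, e2, int_poly6, int_poly6]
  norm_num
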